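/- In a self-similar graph, for m < n and any n-cell C_n, the image φ^m(C_n ∩ F^m) is an (n−m)-cell, and every (n+1)-cell contains exactly μ n-cells and has boundary of size θ_X. -/

import Mathlib

variable {V : Type*}

/-- `C` is a cell w.r.t. `F`: a connected component of `V X ∖ F`. -/
def IsCellOf (G : SimpleGraph V) (F : Set V) (C : Set V) : Prop :=
  C.Nonempty ∧ C ⊆ Fᶜ ∧ (G.induce C).Preconnected ∧
    ∀ D : Set V, C ⊆ D → D ⊆ Fᶜ → (G.induce D).Preconnected → D = C

/-- vertex boundary θC -/
def vBoundary (G : SimpleGraph V) (C : Set V) : Set V :=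
  {v | v ∉ C ∧ ∃ c ∈ C, G.Adj v c}

/-- closure of a set of vertices -/
def vClosure (G : SimpleGraph V) (C : Set V) : Set V := C ∪ vBoundary G C

/-- edge boundary δC -/
def eBoundary (G : SimpleGraph V) (C : Set V) : Set (Sym2 V) :=
  {e | ∃ x y, G.Adj x y ∧ e = s(x, y) ∧ x ∈ C ∧ y ∉ C}

/-- edges of the cell graph Ĉ (subgraph spanned by the closure of C) -/
def cellEdges (G : SimpleGraph V) (C : Set V) : Set (Sym2 V) :=
  {e | ∃ x y, G.Adj x y ∧ e = s(x, y) ∧ x ∈ vClosure G C ∧ y ∈ vClosure G C}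

/-- the reduced graph X_F -/
def reducedGraph (G : SimpleGraph V) (F : Set V) : SimpleGraph F where
  Adj x y := x ≠ y ∧ ∃ C : Set V, IsCellOf G F C ∧
    (x : V) ∈ vBoundary G C ∧ (y : V) ∈ vBoundary G C
  symm := by
    constructor
    rintro x y ⟨hxy, C, hC, hx, hy⟩
    exact ⟨hxy.symm, C, hC, hy, hx⟩
  loopless := by constructor; rintro x ⟨hx, -⟩; exact hx rfl

/-- F^n = ψ^n (V X), as a subset of V -/
def Fpow (G : SimpleGraph V) (F : Set V) (ψ : G ≃g reducedGraph G F) : ℕ → Set V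
  | 0 => Set.univ
  | n + 1 => (fun v => ((ψ v : F) : V)) '' Fpow G F ψ n

/-- (F1) no two vertices of F adjacent -/
def AxiomF1 (G : SimpleGraph V) (F : Set V) : Prop :=
  ∀ x ∈ F, ∀ y ∈ F, ¬ G.Adj x y

/-- (F2) closures of distinct cells share at most one vertex -/
def AxiomF2 (G : SimpleGraph V) (F : Set V) : Prop :=
  ∀ C D : Set V, IsCellOf G F C → IsCellOf G F D → C ≠ D →
    (vClosure G C ∩ vClosure G D).Subsingleton

/-- (H1) cell graphs finite, pairwise isomorphic via boundary preserving isomorphisms -/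
def AxiomH1 (G : SimpleGraph V) (F : Set V) : Prop :=
  (∀ C : Set V, IsCellOf G F C → (vClosure G C).Finite) ∧
  ∀ C D : Set V, IsCellOf G F C → IsCellOf G F D →
    ∃ α : G.induce (vClosure G C) ≃g G.induce (vClosure G D),
      ∀ x : vClosure G C, (x : V) ∈ vBoundary G C → ((α x : vClosure G D) : V) ∈ vBoundary G D

/-- (H2) any two distinct boundary vertices of a cell are at distance ν -/
def AxiomH2 (G : SimpleGraph V) (F : Set V) (ν : ℕ) : Prop :=
  ∀ C : Set V, IsCellOf G F C → ∀ x ∈ vBoundary G C, ∀ y ∈ vBoundary G C,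
    x ≠ y → G.dist x y = ν

/-- constant inner degree `b` : every boundary vertex of every cell has degree b in the cell graph -/
def ConstInnerDegree (G : SimpleGraph V) (F : Set V) (b : ℕ) : Prop :=
  ∀ C : Set V, IsCellOf G F C → ∀ v ∈ vBoundary G C,
    {u ∈ vClosure G C | G.Adj v u}.ncard = b

/-- bounded geometry: vertex degrees uniformly bounded -/
def BoundedGeometry (G : SimpleGraph V) : Prop :=
  ∃ M : ℕ, ∀ v : V, (G.neighborSet v).Finite ∧ (G.neighborSet v).ncard ≤ M

/-- volume of a set of vertices -/
noncomputable def volOf (G : SimpleGraph V) (A : Set V) : ℕ :=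
  ∑ᶠ v ∈ A, (G.neighborSet v).ncard

/-- growth function -/
noncomputable def Vfun (G : SimpleGraph V) (x : V) (r : ℕ) : ℕ :=
  volOf G {y | G.dist x y ≤ r}


/-- the map `φ = ψ⁻¹`, applied to subsets of `F` (viewed inside `V`). -/
def phiSet {V : Type*} (G : SimpleGraph V) (F : Set V) (ψ : G ≃g reducedGraph G F)
    (S : Set V) : Set V :=
  (fun x : F => (ψ.symm x : V)) '' {x : F | (x : V) ∈ S}

/-! Vertices of `F` are pairwise non-adjacent, so when `S ⊆ F` is independent in the reduced
graph `X_F`, an `S`-cell `C` of `X` is a union of `1`-cells glued along points of `F`, and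
`C ∩ F` is an `S`-cell of `X_F` with the same boundary. The one input this needs is that every
`1`-cell has two boundary vertices: the edges of `X_F` give a cell with two, and `θ_X` is
constant. Taking `S = F^(k+1) = ψ(F^k)` and pulling back along `φ = ψ⁻¹`, `C ↦ φ(C ∩ F)` maps
`(k+1)`-cells bijectively onto `k`-cells, preserving boundaries and inclusions; both claims then
follow by induction on the level. -/

open Set

theorem Set.Nonempty.nontrivial_iff_ncard_ne_one {α : Type*} {s : Set α} (hs : s.Nonempty) :
    s.Nontrivial ↔ s.ncard ≠ 1 := by
  refine ⟨fun h h1 => ?_, fun h => ?_⟩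
  · obtain ⟨a, rfl⟩ := ncard_eq_one.1 h1
    exact not_nontrivial_singleton h
  · by_contra hnt
    obtain ⟨a, ha⟩ := hs
    exact h (by rw [(not_nontrivial_iff.1 hnt).eq_singleton_of_mem ha, ncard_singleton])

section Cells

variable {G : SimpleGraph V} {S C D : Set V}

theorem IsCellOf.subset_of_preconnected (hC : IsCellOf G S C) (hDS : D ⊆ Sᶜ)
    (hD : (G.induce D).Preconnected) (hCD : (C ∩ D).Nonempty) : D ⊆ C := by
  have hmax := hC.2.2.2 (C ∪ D) subset_union_left (union_subset hC.2.1 hDS)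
    (G.induce_union_connected hC.2.2.1 hD hCD).preconnected
  exact hmax ▸ subset_union_right

theorem IsCellOf.mem_of_adj (hC : IsCellOf G S C) {c x : V} (hc : c ∈ C) (hx : x ∉ S)
    (hcx : G.Adj c x) : x ∈ C :=
  hC.subset_of_preconnected (D := {c, x}) (insert_subset (hC.2.1 hc) (singleton_subset_iff.2 hx))
    (G.induce_pair_connected_of_adj hcx).preconnected ⟨c, hc, mem_insert c {x}⟩
    (mem_insert_of_mem c rfl)

theorem IsCellOf.eq_of_mem (hC : IsCellOf G S C) (hD : IsCellOf G S D) {v : V}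
    (hvC : v ∈ C) (hvD : v ∈ D) : C = D :=
  (hD.subset_of_preconnected hC.2.1 hC.2.2.1 ⟨v, hvD, hvC⟩).antisymm
    (hC.subset_of_preconnected hD.2.1 hD.2.2.1 ⟨v, hvC, hvD⟩)

theorem IsCellOf.subset_of_isCellOf {T E : Set V} (hST : S ⊆ T) (hC : IsCellOf G S C)
    (hE : IsCellOf G T E) (hCE : (C ∩ E).Nonempty) : E ⊆ C :=
  hC.subset_of_preconnected (hE.2.1.trans (compl_subset_compl.2 hST)) hE.2.2.1 hCE

theorem IsCellOf.vBoundary_subset (hC : IsCellOf G S C) : vBoundary G C ⊆ S := by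
  rintro v ⟨hvC, c, hc, hvc⟩
  by_contra hvS
  exact hvC (hC.mem_of_adj hc hvS hvc.symm)

theorem IsCellOf.subset_of_closed {B : Set V} (hC : IsCellOf G S C)
    (hB : ∀ x ∈ B, ∀ y ∉ S, G.Adj x y → y ∈ B) (hCB : (C ∩ B).Nonempty) : C ⊆ B := by
  obtain ⟨a, haC, haB⟩ := hCB
  intro c hc
  by_contra hcB
  obtain ⟨p⟩ := hC.2.2.1 ⟨a, haC⟩ ⟨c, hc⟩
  obtain ⟨d, -, hd₁, hd₂⟩ := p.exists_boundary_dart {x : C | (x : V) ∈ B} haB hcB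
  exact hd₂ (hB _ hd₁ _ (hC.2.1 d.snd.2) d.adj)

theorem exists_isCellOf_mem {v : V} (hv : v ∉ S) : ∃ C, IsCellOf G S C ∧ v ∈ C := by
  let K := (G.induce Sᶜ).connectedComponentMk ⟨v, hv⟩
  have hvK : v ∈ ((↑) '' K.supp : Set V) := ⟨⟨v, hv⟩, rfl, rfl⟩
  let toInduce : K.toSimpleGraph →g G.induce ((↑) '' K.supp) :=
    ⟨fun x => ⟨x.1.1, x.1, x.2, rfl⟩, fun h => h⟩
  refine ⟨(↑) '' K.supp, ⟨⟨v, hvK⟩, ?_, ?_, fun D hKD hDS hD => ?_⟩, hvK⟩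
  · rintro _ ⟨w, -, rfl⟩
    exact w.2
  · refine K.connected_toSimpleGraph.preconnected.map toInduce ?_
    rintro ⟨_, w, hw, rfl⟩
    exact ⟨⟨w, hw⟩, rfl⟩
  · refine Subset.antisymm (fun d hd => ⟨⟨d, hDS hd⟩, ?_, rfl⟩) hKD
    exact SimpleGraph.ConnectedComponent.sound
      ((hD ⟨d, hd⟩ ⟨v, hKD hvK⟩).map (G.induceHomOfLE hDS).toHom)

theorem vBoundary_nonempty (hG : G.Preconnected) (hC : C.Nonempty) (hC' : Cᶜ.Nonempty) :
    (vBoundary G C).Nonempty := by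
  obtain ⟨u, hu⟩ := hC
  obtain ⟨v, hv⟩ := hC'
  obtain ⟨p⟩ := hG u v
  obtain ⟨d, -, hd₁, hd₂⟩ := p.exists_boundary_dart C hu hv
  exact ⟨d.snd, hd₂, d.fst, hd₁, d.adj.symm⟩

end Cells

section Isomorphisms

variable {V' : Type*} {G : SimpleGraph V} {G' : SimpleGraph V'} (e : G ≃g G')

theorem preconnected_induce_image {A : Set V} (h : (G.induce A).Preconnected) :
    (G'.induce (e '' A)).Preconnected :=
  h.map (SimpleGraph.induceHom e.toHom (mapsTo_image e A))
    (by rintro ⟨_, a, ha, rfl⟩; exact ⟨⟨a, ha⟩, rfl⟩)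

theorem IsCellOf.image {S C : Set V} (hC : IsCellOf G S C) : IsCellOf G' (e '' S) (e '' C) := by
  obtain ⟨hne, hCS, hpre, hmax⟩ := hC
  refine ⟨hne.image e, ?_, preconnected_induce_image e hpre, fun D hCD hDS hD => ?_⟩
  · rintro _ ⟨c, hc, rfl⟩ ⟨s, hs, hsc⟩
    exact hCS hc (e.injective hsc ▸ hs)
  · have hD' : e.symm '' D = C := by
      refine hmax _ (fun c hc => ⟨e c, hCD (mem_image_of_mem e hc), e.symm_apply_apply c⟩) ?_
        (preconnected_induce_image e.symm hD)
      rintro _ ⟨d, hd, rfl⟩ hs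
      exact hDS hd ⟨_, hs, e.apply_symm_apply d⟩
    rw [← hD', image_image]
    simp

theorem vBoundary_image (C : Set V) : vBoundary G' (e '' C) = e '' vBoundary G C := by
  ext x
  obtain ⟨x, rfl⟩ := e.surjective x
  simp only [vBoundary, mem_ofPred_eq, e.injective.mem_set_image, exists_mem_image, e.map_adj_iff]

end Isomorphisms

section ReducedGraph

variable {G : SimpleGraph V} {F S C : Set V}

theorem vBoundary_nontrivial (hconn : G.Connected) (ψ : G ≃g reducedGraph G F) {θX : ℕ}
    (hθX : ∀ C : Set V, IsCellOf G F C → (vBoundary G C).ncard = θX) {E : Set V}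
    (hE : IsCellOf G F E) : (vBoundary G E).Nontrivial := by
  obtain ⟨v, -⟩ := hE.1
  have hne : (vBoundary G E).Nonempty :=
    vBoundary_nonempty hconn.preconnected hE.1 ⟨ψ v, fun h => hE.2.1 h (ψ v).2⟩
  rw [hne.nontrivial_iff_ncard_ne_one, hθX E hE]
  obtain ⟨x, -, c, -, hxc⟩ := hne
  obtain ⟨hxc', E', hE', hx, hc⟩ := ψ.map_adj_iff.2 hxc
  have hE'nt : (vBoundary G E').Nontrivial :=
    nontrivial_of_mem_mem_ne hx hc (Subtype.coe_ne_coe.2 hxc')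
  rw [← hθX E' hE']
  exact hE'nt.nonempty.nontrivial_iff_ncard_ne_one.1 hE'nt

theorem IsCellOf.subset_of_mem_vBoundary (hSF : S ⊆ F) (hC : IsCellOf G S C) {E : Set V}
    (hE : IsCellOf G F E) {p : V} (hp : p ∈ vBoundary G E) (hpC : p ∈ C) : E ⊆ C := by
  obtain ⟨-, e, heE, hpe⟩ := hp
  have heC : e ∈ C := hC.mem_of_adj hpC (fun heS => hE.2.1 heE (hSF heS)) hpe
  exact hC.subset_of_isCellOf hSF hE ⟨e, heC, heE⟩

theorem notMem_of_mem_vBoundary (hS : (reducedGraph G F).IsIndepSet ((↑) ⁻¹' S))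
    {E : Set V} (hE : IsCellOf G F E) {x y : V} (hx : x ∈ vBoundary G E)
    (hy : y ∈ vBoundary G E) (hxy : x ≠ y) (hxS : x ∈ S) : y ∉ S := fun hyS =>
  @hS ⟨x, hE.vBoundary_subset hx⟩ hxS ⟨y, hE.vBoundary_subset hy⟩ hyS
    (fun h => hxy (congrArg Subtype.val h)) ⟨fun h => hxy (congrArg Subtype.val h), E, hE, hx, hy⟩

theorem IsCellOf.inter_nonempty (hSF : S ⊆ F) (hS : (reducedGraph G F).IsIndepSet ((↑) ⁻¹' S))
    (hbd : ∀ E, IsCellOf G F E → (vBoundary G E).Nontrivial) (hC : IsCellOf G S C) :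
    (C ∩ F).Nonempty := by
  obtain ⟨v, hvC⟩ := hC.1
  by_cases hvF : v ∈ F
  · exact ⟨v, hvC, hvF⟩
  obtain ⟨E, hE, hvE⟩ := exists_isCellOf_mem hvF
  have hEC : E ⊆ C := hC.subset_of_isCellOf hSF hE ⟨v, hvC, hvE⟩
  obtain ⟨x, hx, y, hy, hxy⟩ := hbd E hE
  obtain ⟨z, hz, hzS⟩ : ∃ z ∈ vBoundary G E, z ∉ S := by
    by_cases hxS : x ∈ S
    · exact ⟨y, hy, notMem_of_mem_vBoundary hS hE hx hy hxy hxS⟩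
    · exact ⟨x, hx, hxS⟩
  obtain ⟨e, heE, hze⟩ := hz.2
  exact ⟨z, hC.mem_of_adj (hEC heE) hzS hze.symm, hE.vBoundary_subset hz⟩

theorem IsCellOf.mem_of_reducedGraph_adj (hSF : S ⊆ F) (hC : IsCellOf G S C) {x y : F}
    (hx : (x : V) ∈ C) (hy : (y : V) ∉ S) (hxy : (reducedGraph G F).Adj x y) : (y : V) ∈ C := by
  obtain ⟨-, E, hE, hxE, -, e, heE, hye⟩ := hxy
  exact hC.mem_of_adj (hC.subset_of_mem_vBoundary hSF hE hxE hx heE) hy hye.symm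

/-- `C` is covered by `K` and the `1`-cells attached to `K`. -/
theorem IsCellOf.preimage_val_subset (hF1 : AxiomF1 G F) (hC : IsCellOf G S C) {K : Set F}
    (hK : IsCellOf (reducedGraph G F) ((↑) ⁻¹' S) K) (hCK : ∃ a ∈ K, (a : V) ∈ C) :
    (↑) ⁻¹' C ⊆ K := by
  let D : Set V := {v | (∃ h : v ∈ F, (⟨v, h⟩ : F) ∈ K) ∨
    ∃ E, IsCellOf G F E ∧ v ∈ E ∧ ∃ k ∈ K, (k : V) ∈ vBoundary G E}
  have hCD : C ⊆ D := by
    refine hC.subset_of_closed ?_ (by obtain ⟨a, haK, haC⟩ := hCK; exact ⟨a, haC, .inl ⟨a.2, haK⟩⟩)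
    rintro x (⟨hxF, hxK⟩ | ⟨E, hE, hxE, k, hkK, hkE⟩) y hyS hxy
    · obtain ⟨E, hE, hyE⟩ := exists_isCellOf_mem (fun hyF => hF1 x hxF y hyF hxy)
      exact .inr ⟨E, hE, hyE, ⟨x, hxF⟩, hxK, fun hxE => hE.2.1 hxE hxF, y, hyE, hxy⟩
    · by_cases hyF : y ∈ F
      · refine .inl ⟨hyF, ?_⟩
        by_cases hyk : k = ⟨y, hyF⟩
        · exact hyk ▸ hkK
        · exact hK.mem_of_adj hkK hyS
            ⟨hyk, E, hE, hkE, fun hyE => hE.2.1 hyE hyF, x, hxE, hxy.symm⟩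
      · exact .inr ⟨E, hE, hE.mem_of_adj hxE hyF hxy, k, hkK, hkE⟩
  intro x hxC
  obtain ⟨_, hxK⟩ | ⟨E, hE, hxE, -⟩ := hCD hxC
  · exact hxK
  · exact absurd x.2 (hE.2.1 hxE)

theorem IsCellOf.preimage_val (hF1 : AxiomF1 G F) (hSF : S ⊆ F)
    (hS : (reducedGraph G F).IsIndepSet ((↑) ⁻¹' S))
    (hbd : ∀ E, IsCellOf G F E → (vBoundary G E).Nontrivial) (hC : IsCellOf G S C) :
    IsCellOf (reducedGraph G F) ((↑) ⁻¹' S) ((↑) ⁻¹' C) := by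
  obtain ⟨a, haC, haF⟩ := hC.inter_nonempty hSF hS hbd
  obtain ⟨K, hK, haK⟩ :=
    exists_isCellOf_mem (G := reducedGraph G F) (S := (↑) ⁻¹' S) (v := ⟨a, haF⟩) (hC.2.1 haC)
  have hKC : K ⊆ (↑) ⁻¹' C :=
    hK.subset_of_closed (fun _ hx _ hy hxy => hC.mem_of_reducedGraph_adj hSF hx hy hxy)
      ⟨_, haK, haC⟩
  rwa [← hKC.antisymm (hC.preimage_val_subset hF1 hK ⟨_, haK, haC⟩)]

theorem IsCellOf.vBoundary_preimage_val (hF1 : AxiomF1 G F) (hSF : S ⊆ F)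
    (hS : (reducedGraph G F).IsIndepSet ((↑) ⁻¹' S))
    (hbd : ∀ E, IsCellOf G F E → (vBoundary G E).Nontrivial) (hC : IsCellOf G S C) :
    vBoundary (reducedGraph G F) ((↑) ⁻¹' C) = (↑) ⁻¹' vBoundary G C := by
  ext x
  constructor
  · rintro ⟨hxC, c, hcC, -, E, hE, ⟨-, e, heE, hxe⟩, hcE⟩
    exact ⟨hxC, e, hC.subset_of_mem_vBoundary hSF hE hcE hcC heE, hxe⟩
  · rintro ⟨hxC, c, hcC, hxc⟩
    have hxS : (x : V) ∈ S := hC.vBoundary_subset ⟨hxC, c, hcC, hxc⟩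
    obtain ⟨E, hE, hcE⟩ := exists_isCellOf_mem (fun hcF => hF1 x x.2 c hcF hxc)
    have hEC : E ⊆ C := hC.subset_of_isCellOf hSF hE ⟨c, hcC, hcE⟩
    have hxE : (x : V) ∈ vBoundary G E := ⟨fun hxE => hE.2.1 hxE x.2, c, hcE, hxc⟩
    obtain ⟨z, hz, hzx⟩ := (hbd E hE).exists_ne x
    have hzS : z ∉ S := notMem_of_mem_vBoundary hS hE hxE hz hzx.symm hxS
    obtain ⟨e, heE, hze⟩ := hz.2
    refine ⟨hxC, ⟨z, hE.vBoundary_subset hz⟩, hC.mem_of_adj (hEC heE) hzS hze.symm,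
      fun h => hzx (congrArg Subtype.val h).symm, E, hE, hxE, hz⟩

end ReducedGraph

section Levels

variable {G : SimpleGraph V} {F : Set V} (ψ : G ≃g reducedGraph G F)

theorem Fpow_subset {n : ℕ} (hn : 1 ≤ n) : Fpow G F ψ n ⊆ F := by
  obtain ⟨n, rfl⟩ := Nat.exists_eq_add_of_le' hn
  rintro _ ⟨v, -, rfl⟩
  exact (ψ v).2

theorem Fpow_succ_subset (n : ℕ) : Fpow G F ψ (n + 1) ⊆ Fpow G F ψ n := by
  induction n with
  | zero => exact subset_univ _
  | succ n ih => exact image_mono ih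

theorem Fpow_one : Fpow G F ψ 1 = F :=
  (Fpow_subset ψ le_rfl).antisymm fun x hx => ⟨ψ.symm ⟨x, hx⟩, trivial, by simp⟩

theorem preimage_val_Fpow_succ (n : ℕ) :
    ((↑) : F → V) ⁻¹' Fpow G F ψ (n + 1) = ψ '' Fpow G F ψ n := by
  have h := Subtype.val_injective.preimage_image (ψ '' Fpow G F ψ n)
  rwa [image_image] at h

theorem isIndepSet_preimage_val_Fpow (hF1 : AxiomF1 G F) {n : ℕ} (hn : 1 ≤ n) :
    (reducedGraph G F).IsIndepSet ((↑) ⁻¹' Fpow G F ψ (n + 1)) := by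
  rw [preimage_val_Fpow_succ]
  rintro _ ⟨a, ha, rfl⟩ _ ⟨b, hb, rfl⟩ - hab
  exact hF1 a (Fpow_subset ψ hn ha) b (Fpow_subset ψ hn hb) (ψ.map_adj_iff.1 hab)

theorem phiSet_eq_image (S : Set V) : phiSet G F ψ S = ψ.symm '' ((↑) ⁻¹' S) := rfl

theorem phiSet_mono {A B : Set V} (h : A ⊆ B) : phiSet G F ψ A ⊆ phiSet G F ψ B :=
  image_mono (preimage_mono h)

theorem phiSet_inter (A B : Set V) :
    phiSet G F ψ (A ∩ B) = phiSet G F ψ A ∩ phiSet G F ψ B :=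
  image_inter ψ.symm.injective

theorem phiSet_Fpow_succ (n : ℕ) : phiSet G F ψ (Fpow G F ψ (n + 1)) = Fpow G F ψ n := by
  rw [phiSet_eq_image, preimage_val_Fpow_succ, image_image]
  simp

theorem ncard_phiSet {A : Set V} (hA : A ⊆ F) : (phiSet G F ψ A).ncard = A.ncard := by
  rw [phiSet_eq_image, ncard_image_of_injective _ ψ.symm.injective,
    ncard_preimage_of_injective_subset_range Subtype.val_injective (by simpa using hA)]

variable {C : Set V} {k : ℕ}

theorem isCellOf_phiSet (hF1 : AxiomF1 G F)
    (hbd : ∀ E, IsCellOf G F E → (vBoundary G E).Nontrivial) (hk : 1 ≤ k)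
    (hC : IsCellOf G (Fpow G F ψ (k + 1)) C) :
    IsCellOf G (Fpow G F ψ k) (phiSet G F ψ C) := by
  have h := (hC.preimage_val hF1 (Fpow_subset ψ (by omega))
    (isIndepSet_preimage_val_Fpow ψ hF1 hk) hbd).image ψ.symm
  rwa [← phiSet_eq_image, ← phiSet_eq_image, phiSet_Fpow_succ] at h

theorem vBoundary_phiSet (hF1 : AxiomF1 G F)
    (hbd : ∀ E, IsCellOf G F E → (vBoundary G E).Nontrivial) (hk : 1 ≤ k)
    (hC : IsCellOf G (Fpow G F ψ (k + 1)) C) :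
    vBoundary G (phiSet G F ψ C) = phiSet G F ψ (vBoundary G C) := by
  rw [phiSet_eq_image, phiSet_eq_image, vBoundary_image, hC.vBoundary_preimage_val hF1
    (Fpow_subset ψ (by omega)) (isIndepSet_preimage_val_Fpow ψ hF1 hk) hbd]

theorem phiSet_injOn (hF1 : AxiomF1 G F)
    (hbd : ∀ E, IsCellOf G F E → (vBoundary G E).Nontrivial) (hk : 1 ≤ k) :
    InjOn (phiSet G F ψ) {C | IsCellOf G (Fpow G F ψ (k + 1)) C} := by
  intro C hC D hD hCD
  obtain ⟨a, haC, haF⟩ := hC.inter_nonempty (Fpow_subset ψ (by omega))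
    (isIndepSet_preimage_val_Fpow ψ hF1 hk) hbd
  obtain ⟨b, hbD, hba⟩ : ψ.symm ⟨a, haF⟩ ∈ phiSet G F ψ D := hCD ▸ ⟨⟨a, haF⟩, haC, rfl⟩
  rw [ψ.symm.injective hba] at hbD
  exact hC.eq_of_mem hD haC hbD

theorem ncard_subcells_phiSet (hF1 : AxiomF1 G F)
    (hbd : ∀ E, IsCellOf G F E → (vBoundary G E).Nontrivial) (hk : 1 ≤ k)
    (hC : IsCellOf G (Fpow G F ψ (k + 2)) C) :
    {D | IsCellOf G (Fpow G F ψ (k + 1)) D ∧ D ⊆ C}.ncard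
      = {D | IsCellOf G (Fpow G F ψ k) D ∧ D ⊆ phiSet G F ψ C}.ncard := by
  rw [← ((phiSet_injOn ψ hF1 hbd hk).mono fun D hD => hD.1).ncard_image]
  congr 1
  ext D'
  constructor
  · rintro ⟨D, ⟨hD, hDC⟩, rfl⟩
    exact ⟨isCellOf_phiSet ψ hF1 hbd hk hD, phiSet_mono ψ hDC⟩
  · rintro ⟨hD', hD'C⟩
    obtain ⟨d, hd⟩ := hD'.1
    obtain ⟨x, hxC, rfl⟩ := hD'C hd
    have hx : (x : V) ∉ Fpow G F ψ (k + 1) := by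
      rw [← mem_preimage, preimage_val_Fpow_succ]
      rintro ⟨a, ha, rfl⟩
      exact hD'.2.1 hd (by simpa using ha)
    obtain ⟨D, hD, hxD⟩ := exists_isCellOf_mem hx
    refine ⟨D, ⟨hD, hC.subset_of_isCellOf (Fpow_succ_subset ψ _) hD ⟨x, hxC, hxD⟩⟩, ?_⟩
    exact (isCellOf_phiSet ψ hF1 hbd hk hD).eq_of_mem hD' ⟨x, hxD, rfl⟩ hd

theorem isCellOf_iterate_phiSet (hF1 : AxiomF1 G F)
    (hbd : ∀ E, IsCellOf G F E → (vBoundary G E).Nontrivial) {n : ℕ} (hn : 1 ≤ n) :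
    ∀ m {C : Set V}, IsCellOf G (Fpow G F ψ (n + m)) C →
      IsCellOf G (Fpow G F ψ n) ((phiSet G F ψ)^[m] (C ∩ Fpow G F ψ m))
  | 0, C, hC => by simpa [Fpow] using hC
  | m + 1, C, hC => by
    rw [Function.iterate_succ_apply, phiSet_inter, phiSet_Fpow_succ]
    exact isCellOf_iterate_phiSet hF1 hbd hn m (isCellOf_phiSet ψ hF1 hbd (by omega) hC)

theorem ncard_vBoundary_of_isCellOf_Fpow (hF1 : AxiomF1 G F)
    (hbd : ∀ E, IsCellOf G F E → (vBoundary G E).Nontrivial) {θX : ℕ}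
    (hθX : ∀ C : Set V, IsCellOf G F C → (vBoundary G C).ncard = θX) {n : ℕ} (hn : 1 ≤ n)
    {C : Set V} (hC : IsCellOf G (Fpow G F ψ n) C) : (vBoundary G C).ncard = θX := by
  induction n, hn using Nat.le_induction generalizing C with
  | base => exact hθX C (Fpow_one ψ ▸ hC)
  | succ n hn ih =>
    rw [← ncard_phiSet ψ (hC.vBoundary_subset.trans (Fpow_subset ψ (by omega))),
      ← vBoundary_phiSet ψ hF1 hbd hn hC]
    exact ih (isCellOf_phiSet ψ hF1 hbd hn hC)

theorem ncard_subcells_of_isCellOf_Fpow (hF1 : AxiomF1 G F)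
    (hbd : ∀ E, IsCellOf G F E → (vBoundary G E).Nontrivial) {μ : ℕ}
    (hμ : ∀ C₂ : Set V, IsCellOf G (Fpow G F ψ 2) C₂ →
      {D : Set V | IsCellOf G F D ∧ D ⊆ C₂}.ncard = μ) {n : ℕ} (hn : 1 ≤ n)
    {C : Set V} (hC : IsCellOf G (Fpow G F ψ (n + 1)) C) :
    {D | IsCellOf G (Fpow G F ψ n) D ∧ D ⊆ C}.ncard = μ := by
  induction n, hn using Nat.le_induction generalizing C with
  | base => simpa only [Fpow_one] using hμ C hC
  | succ n hn ih =>
    rw [ncard_subcells_phiSet ψ hF1 hbd hn hC]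
    exact ih (isCellOf_phiSet ψ hF1 hbd (by omega) hC)

end Levels

theorem phi_image_is_cell_and_cell_count_general
    {V : Type*} (G : SimpleGraph V) (hconn : G.Connected)
    (F : Set V) (ψ : G ≃g reducedGraph G F)
    (hF1 : AxiomF1 G F)
    (θX μ : ℕ)
    (hθX : ∀ C : Set V, IsCellOf G F C → (vBoundary G C).ncard = θX)
    (hμ : ∀ C₂ : Set V, IsCellOf G (Fpow G F ψ 2) C₂ →
      {D : Set V | IsCellOf G F D ∧ D ⊆ C₂}.ncard = μ) :
    (∀ m n : ℕ, 1 ≤ m → m < n → ∀ Cn : Set V, IsCellOf G (Fpow G F ψ n) Cn →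
      IsCellOf G (Fpow G F ψ (n - m)) ((phiSet G F ψ)^[m] (Cn ∩ Fpow G F ψ m)))
    ∧ (∀ n : ℕ, 1 ≤ n → ∀ Cn1 : Set V, IsCellOf G (Fpow G F ψ (n + 1)) Cn1 →
        {D : Set V | IsCellOf G (Fpow G F ψ n) D ∧ D ⊆ Cn1}.ncard = μ
        ∧ (vBoundary G Cn1).ncard = θX) := by
  have hbd : ∀ E, IsCellOf G F E → (vBoundary G E).Nontrivial :=
    fun _ hE => vBoundary_nontrivial hconn ψ hθX hE
  refine ⟨fun m n _ hmn Cn hCn => ?_, fun n hn Cn1 hC => ⟨?_, ?_⟩⟩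
  · rw [← Nat.sub_add_cancel hmn.le] at hCn
    exact isCellOf_iterate_phiSet ψ hF1 hbd (by omega) m hCn
  · exact ncard_subcells_of_isCellOf_Fpow ψ hF1 hbd hμ hn hC
  · exact ncard_vBoundary_of_isCellOf_Fpow ψ hF1 hbd hθX (by omega) hC

/-- In a self-similar graph: (i) for `m < n` and any n-cell `C_n`, the image
`φ^m(C_n ∩ F^m)` is an (n−m)-cell; (ii) every (n+1)-cell contains exactly `μ`
n-cells and has boundary of size `θ_X`. -/
theorem phi_image_is_cell_and_cell_count
    {V : Type*} [Infinite V] (G : SimpleGraph V) (hconn : G.Connected)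
    (F : Set V) (ψ : G ≃g reducedGraph G F)
    (hF1 : AxiomF1 G F) (hF2 : AxiomF2 G F)
    (θX μ : ℕ)
    (hθX : ∀ C : Set V, IsCellOf G F C → (vBoundary G C).ncard = θX)
    (hμ : ∀ C₂ : Set V, IsCellOf G (Fpow G F ψ 2) C₂ →
      {D : Set V | IsCellOf G F D ∧ D ⊆ C₂}.ncard = μ) :
    (∀ m n : ℕ, 1 ≤ m → m < n → ∀ Cn : Set V, IsCellOf G (Fpow G F ψ n) Cn →
      IsCellOf G (Fpow G F ψ (n - m)) ((phiSet G F ψ)^[m] (Cn ∩ Fpow G F ψ m)))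
    ∧ (∀ n : ℕ, 1 ≤ n → ∀ Cn1 : Set V, IsCellOf G (Fpow G F ψ (n + 1)) Cn1 →
        {D : Set V | IsCellOf G (Fpow G F ψ n) D ∧ D ⊆ Cn1}.ncard = μ
        ∧ (vBoundary G Cn1).ncard = θX) :=
  phi_image_is_cell_and_cell_count_general G hconn F ψ hF1 θX μ hθX hμ
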